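/- Let K^{(3)} be the CRG with five white vertices u, v_1, w_1, v_2, w_2, in which the edges {v_1, w_1} and {v_2, w_2} are black and all other edges are gray. Then for every p ∈ [0,1], g_{K^{(3)}}(p) = min{ p/3, p/(1+4p) }. -/

import Mathlib

/-- Colors for edges of a colored regularity graph. -/
inductive EColor : Type
  | white
  | gray
  | black
deriving DecidableEq

/-- A colored regularity graph (CRG) on a finite vertex type `V`: each vertex is
white or black (`vWhite v = true` means white), and each pair of distinct vertices
gets a symmetric edge color (white, gray or black). -/
structure CRG (V : Type) [Fintype V] where
  vWhite : V → Bool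
  ecolor : V → V → EColor
  ecolor_symm : ∀ u v, ecolor u v = ecolor v u

namespace CRG

variable {V : Type} [Fintype V] [DecidableEq V]

/-- The matrix `M_K(p)`. -/
noncomputable def M (K : CRG V) (p : ℝ) (u v : V) : ℝ :=
  if u = v then (if K.vWhite u then p else 1 - p)
  else
    match K.ecolor u v with
    | EColor.white => p
    | EColor.black => 1 - p
    | EColor.gray => 0

/-- The function `g_K(p)`: the minimum of `xᵀ M_K(p) x` over nonnegative weight
vectors summing to `1`. -/
noncomputable def g (K : CRG V) (p : ℝ) : ℝ :=
  sInf {r : ℝ | ∃ x : V → ℝ, (∀ v, 0 ≤ x v) ∧ (∑ v, x v) = 1 ∧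
    r = ∑ u, ∑ v, x u * K.M p u v * x v}

/-- The sub-CRG induced on a subset `s` of the vertices. -/
def sub (K : CRG V) (s : Finset V) : CRG {v // v ∈ s} where
  vWhite := fun v => K.vWhite v.1
  ecolor := fun u v => K.ecolor u.1 v.1
  ecolor_symm := fun u v => K.ecolor_symm u.1 v.1

/-- `K` is `p`-core if `g_K(p) < g_{K'}(p)` for every proper (nonempty) sub-CRG `K'`. -/
def IsPCore (K : CRG V) (p : ℝ) : Prop :=
  ∀ s : Finset V, s.Nonempty → s ≠ Finset.univ → K.g p < (K.sub s).g p

/-- `x` is an optimal weight vector for `K` at `p`. -/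
def IsOptWeight (K : CRG V) (p : ℝ) (x : V → ℝ) : Prop :=
  (∀ v, 0 ≤ x v) ∧ (∑ v, x v) = 1 ∧
    (∑ u, ∑ v, x u * K.M p u v * x v) = K.g p

/-- The gray degree `d_G(v)`: total weight of gray neighbors of `v`. -/
noncomputable def dG (K : CRG V) (x : V → ℝ) (v : V) : ℝ :=
  ∑ w ∈ Finset.univ.filter fun w => w ≠ v ∧ K.ecolor v w = EColor.gray, x w

/-- The white degree `d_W(v)`: total weight of white neighbors of `v`, including `v`
itself if `v` is white. -/
noncomputable def dW (K : CRG V) (x : V → ℝ) (v : V) : ℝ :=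
  (∑ w ∈ Finset.univ.filter fun w => w ≠ v ∧ K.ecolor v w = EColor.white, x w) +
    (if K.vWhite v then x v else 0)

/-- The black degree `d_B(v)`: total weight of black neighbors of `v`, including `v`
itself if `v` is black. -/
noncomputable def dB (K : CRG V) (x : V → ℝ) (v : V) : ℝ :=
  (∑ w ∈ Finset.univ.filter fun w => w ≠ v ∧ K.ecolor v w = EColor.black, x w) +
    (if K.vWhite v then 0 else x v)

/-- The number of gray neighbors of `v`. -/
def grayDeg (K : CRG V) (v : V) : ℕ :=
  (Finset.univ.filter fun w => w ≠ v ∧ K.ecolor v w = EColor.gray).card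

end CRG

/-- A graph `H` embeds in a CRG `K`, written `H ↦ K`. -/
def EmbedsIn {α : Type*} {V : Type} [Fintype V] (H : SimpleGraph α) (K : CRG V) : Prop :=
  ∃ φ : α → V,
    (∀ a b : α, H.Adj a b →
      (φ a = φ b ∧ K.vWhite (φ a) = false) ∨
      (φ a ≠ φ b ∧ (K.ecolor (φ a) (φ b) = EColor.black ∨ K.ecolor (φ a) (φ b) = EColor.gray))) ∧
    (∀ a b : α, a ≠ b → ¬H.Adj a b →
      (φ a = φ b ∧ K.vWhite (φ a) = true) ∨
      (φ a ≠ φ b ∧ (K.ecolor (φ a) (φ b) = EColor.white ∨ K.ecolor (φ a) (φ b) = EColor.gray)))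

/-- The CRG `K⁽³⁾`: five white vertices `u = 0`, `v₁ = 1`, `w₁ = 2`, `v₂ = 3`, `w₂ = 4`;
the edges `{v₁, w₁}` and `{v₂, w₂}` are black and all other edges are gray. -/
def K3 : CRG (Fin 5) where
  vWhite := fun _ => true
  ecolor := fun i j =>
    if (i = 1 ∧ j = 2) ∨ (i = 2 ∧ j = 1) ∨ (i = 3 ∧ j = 4) ∨ (i = 4 ∧ j = 3) then
      EColor.black
    else EColor.gray
  ecolor_symm := by decide


/-!
On the simplex the quadratic form of `K⁽³⁾` is
`Q(x) = p ∑ xᵢ² + 2(1 - p)(x₁x₂ + x₃x₄)`. For `p ≤ 1/2` the bound `Q ≥ p/3` is a sum of squares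
plus the nonnegative products `(1 - 2p) x₁x₂`, `(1 - 2p) x₃x₄`, and is attained at
`(1, 1, 0, 1, 0)/3`. For `p ≥ 1/2` the bound `Q ≥ p/(1 + 4p)` is a pure sum of squares, with
equality at `(1, p, p, p, p)/(1 + 4p)`.
-/

namespace CRG

variable {V : Type} [Fintype V] [DecidableEq V]

theorem g_eq_of_forall_le_of_exists (K : CRG V) {p m : ℝ}
    (lower : ∀ x : V → ℝ, (∀ v, 0 ≤ x v) → ∑ v, x v = 1 → m ≤ ∑ u, ∑ v, x u * K.M p u v * x v)
    (attained : ∃ x : V → ℝ, (∀ v, 0 ≤ x v) ∧ ∑ v, x v = 1 ∧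
      ∑ u, ∑ v, x u * K.M p u v * x v = m) :
    K.g p = m := by
  refine IsLeast.csInf_eq ⟨?_, ?_⟩
  · obtain ⟨x, hx, hsum, hm⟩ := attained
    exact ⟨x, hx, hsum, hm.symm⟩
  · rintro r ⟨x, hx, hsum, rfl⟩
    exact lower x hx hsum

end CRG

theorem K3_quadraticForm_eq (p : ℝ) (x : Fin 5 → ℝ) :
    ∑ u, ∑ v, x u * K3.M p u v * x v =
      p * (x 0 ^ 2 + x 1 ^ 2 + x 2 ^ 2 + x 3 ^ 2 + x 4 ^ 2) +
        2 * (1 - p) * (x 1 * x 2 + x 3 * x 4) := by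
  simp only [Fin.sum_univ_five]
  simp +decide only [CRG.M, K3, if_true, if_false]
  ring

theorem sq_sum_five_le_three_mul {p a b c d e : ℝ} (hp : 0 ≤ p) (hp_half : p ≤ 1 / 2)
    (hb : 0 ≤ b) (hc : 0 ≤ c) (hd : 0 ≤ d) (he : 0 ≤ e) :
    p * (a + b + c + d + e) ^ 2 ≤
      3 * (p * (a ^ 2 + b ^ 2 + c ^ 2 + d ^ 2 + e ^ 2) + 2 * (1 - p) * (b * c + d * e)) := by
  have hq : 0 ≤ 1 - 2 * p := by linarith
  have key : 3 * (p * (a ^ 2 + b ^ 2 + c ^ 2 + d ^ 2 + e ^ 2) + 2 * (1 - p) * (b * c + d * e)) -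
      p * (a + b + c + d + e) ^ 2 =
      p * ((a - b - c) ^ 2 + (a - d - e) ^ 2 + (b + c - d - e) ^ 2) +
        6 * (1 - 2 * p) * (b * c + d * e) := by ring
  have : 0 ≤ p * ((a - b - c) ^ 2 + (a - d - e) ^ 2 + (b + c - d - e) ^ 2) +
      6 * (1 - 2 * p) * (b * c + d * e) := by positivity
  linarith

theorem sq_sum_five_le_one_add_four_mul {p a b c d e : ℝ} (hp_half : 1 / 2 ≤ p) :
    p * (a + b + c + d + e) ^ 2 ≤
      (1 + 4 * p) *
        (p * (a ^ 2 + b ^ 2 + c ^ 2 + d ^ 2 + e ^ 2) + 2 * (1 - p) * (b * c + d * e)) := by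
  have hp : 0 ≤ p := by linarith
  have hq : 0 ≤ 2 * p - 1 := by linarith
  have key : (1 + 4 * p) *
      (p * (a ^ 2 + b ^ 2 + c ^ 2 + d ^ 2 + e ^ 2) + 2 * (1 - p) * (b * c + d * e)) -
      p * (a + b + c + d + e) ^ 2 =
      ((b + c - 2 * p * a) ^ 2 + (d + e - 2 * p * a) ^ 2) / 2 + p * (b + c - d - e) ^ 2 +
        (1 + 4 * p) * (2 * p - 1) * ((b - c) ^ 2 + (d - e) ^ 2) / 2 := by ring
  have : 0 ≤ ((b + c - 2 * p * a) ^ 2 + (d + e - 2 * p * a) ^ 2) / 2 + p * (b + c - d - e) ^ 2 +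
      (1 + 4 * p) * (2 * p - 1) * ((b - c) ^ 2 + (d - e) ^ 2) / 2 := by positivity
  linarith

theorem K3_g_eq_of_le_half {p : ℝ} (hp : 0 ≤ p) (hp_half : p ≤ 1 / 2) : K3.g p = p / 3 := by
  refine K3.g_eq_of_forall_le_of_exists (fun x hx hsum => ?_) ⟨![1/3, 1/3, 0, 1/3, 0], ?_, ?_, ?_⟩
  · rw [K3_quadraticForm_eq]
    rw [Fin.sum_univ_five] at hsum
    have := sq_sum_five_le_three_mul (a := x 0) hp hp_half (hx 1) (hx 2) (hx 3) (hx 4)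
    rw [hsum] at this
    linarith
  · intro v
    fin_cases v <;> norm_num
  · simp only [Fin.sum_univ_five, Matrix.cons_val_zero, Matrix.cons_val_one, Matrix.cons_val]
    norm_num
  · rw [K3_quadraticForm_eq]
    simp only [Matrix.cons_val_zero, Matrix.cons_val_one, Matrix.cons_val]
    ring

theorem K3_g_eq_of_half_le {p : ℝ} (hp_half : 1 / 2 ≤ p) : K3.g p = p / (1 + 4 * p) := by
  have hpos : 0 < 1 + 4 * p := by linarith
  refine K3.g_eq_of_forall_le_of_exists (fun x _ hsum => ?_)
    ⟨fun i => ![1, p, p, p, p] i / (1 + 4 * p), fun v => ?_, ?_, ?_⟩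
  · rw [K3_quadraticForm_eq, div_le_iff₀ hpos]
    rw [Fin.sum_univ_five] at hsum
    have := sq_sum_five_le_one_add_four_mul (a := x 0) (b := x 1) (c := x 2) (d := x 3)
      (e := x 4) hp_half
    rw [hsum] at this
    linarith
  · have : 0 ≤ ![1, p, p, p, p] v := by
      fin_cases v <;> simp only [Fin.reduceFinMk, Matrix.cons_val] <;> linarith
    positivity
  · simp only [Fin.sum_univ_five, Matrix.cons_val_zero, Matrix.cons_val_one, Matrix.cons_val]
    field_simp
    ring
  · rw [K3_quadraticForm_eq]
    simp only [Matrix.cons_val_zero, Matrix.cons_val_one, Matrix.cons_val]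
    field_simp
    ring

theorem g_K3 : ∀ p ∈ Set.Icc (0 : ℝ) 1,
    K3.g p = min (p / 3) (p / (1 + 4 * p)) := by
  rintro p ⟨hp, -⟩
  have hpos : 0 < 1 + 4 * p := by linarith
  rcases le_total p (1 / 2) with hp_half | hp_half
  · rw [K3_g_eq_of_le_half hp hp_half, min_eq_left]
    rw [div_le_div_iff₀ (by norm_num) hpos]
    nlinarith
  · rw [K3_g_eq_of_half_le hp_half, min_eq_right]
    rw [div_le_div_iff₀ hpos (by norm_num)]
    nlinarith
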